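/- Let f: M → ℝ∪{±∞}, let x ∈ M, y ∈ I⁺(x), t > 0, and suppose f(y) and T̂_t f(x) := sup_z {f(z) - c_t(x,z)} are finite, with the sup attained at z = y: T̂_t f(x) = f(y) - c_t(x,y). If γ:[0,t]→M is a maximizing geodesic from x to y, then ∂L/∂v(y, γ'(t)) ∈ ∂⁺f(y), i.e. the Legendre transform of the final velocity is a super-differential of f at y. -/

import Mathlib

/- STATEMENT 10: Let f : M → ℝ∪{±∞}, y ∈ I⁺(x), t > 0, and suppose f(y) and
T̂_t f(x) = sup_z {f(z) - c_t(x,z)} are finite, with the sup attained at z = y.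
If γ:[0,t]→M is a maximizing geodesic from x to y then the Legendre transform
∂L/∂v(y,γ'(t)) of its final velocity lies in the super-differential ∂⁺f(y).
We work in a chart (M identified with ℝⁿ); the cost c, the chronology relation,
the maximizing-geodesic predicate and the Legendre covector `Lv γ t` (represented by
its dual vector) are data, and the fact that Lv γ t super-differentiates c_t(x,·)
at y (Lemma on the super-differential of the cost) is a recorded hypothesis. -/

open RealInnerProductSpace Topology

/-- Super-differential of a real-valued function. -/
def superDiffR {n : ℕ} (g : EuclideanSpace ℝ (Fin n) → ℝ) (y : EuclideanSpace ℝ (Fin n)) :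
    Set (EuclideanSpace ℝ (Fin n)) :=
  {p | ∀ ε : ℝ, 0 < ε → ∀ᶠ z in 𝓝 y, g z ≤ g y + ⟪p, z - y⟫ + ε * ‖z - y‖}

/-- Super-differential of an extended-real-valued function. -/
def superDiffE {n : ℕ} (f : EuclideanSpace ℝ (Fin n) → EReal) (y : EuclideanSpace ℝ (Fin n)) :
    Set (EuclideanSpace ℝ (Fin n)) :=
  {p | ∀ ε : ℝ, 0 < ε → ∀ᶠ z in 𝓝 y,
    f z ≤ f y + ((⟪p, z - y⟫ + ε * ‖z - y‖ : ℝ) : EReal)}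

theorem EReal.le_add_coe_of_sub_coe_le_sub_coe {u v : EReal} {a b r : ℝ}
    (h : u - a ≤ v - b) (hab : a ≤ b + r) : u ≤ v + r :=
  calc u = u - a + a := EReal.sub_add_cancel.symm
    _ ≤ v - b + a := add_le_add_left h _
    _ = v + ((a - b : ℝ) : EReal) := by
      rw [EReal.coe_sub, sub_eq_add_neg, sub_eq_add_neg, add_assoc, add_comm (-(b : EReal))]
    _ ≤ v + r := add_le_add_right (EReal.coe_le_coe_iff.2 (by linarith)) _

theorem mem_superDiffE_of_forall_sub_le {n : ℕ} {f : EuclideanSpace ℝ (Fin n) → EReal}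
    {g : EuclideanSpace ℝ (Fin n) → ℝ} {y p : EuclideanSpace ℝ (Fin n)}
    (hp : p ∈ superDiffR g y) (hmax : ∀ z, f z - (g z : EReal) ≤ f y - (g y : EReal)) :
    p ∈ superDiffE f y := fun ε hε => by
  filter_upwards [hp ε hε] with z hz
  exact EReal.le_add_coe_of_sub_coe_le_sub_coe (hmax z) (by linarith)

theorem stmt_10_general {n : ℕ}
    (c : ℝ → EuclideanSpace ℝ (Fin n) → EuclideanSpace ℝ (Fin n) → ℝ)
    (IsMaxGeodesic : ℝ → EuclideanSpace ℝ (Fin n) → EuclideanSpace ℝ (Fin n) →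
      (ℝ → EuclideanSpace ℝ (Fin n)) → Prop)
    (Lv : (ℝ → EuclideanSpace ℝ (Fin n)) → ℝ → EuclideanSpace ℝ (Fin n))
    (f : EuclideanSpace ℝ (Fin n) → EReal)
    (t : ℝ) (x y : EuclideanSpace ℝ (Fin n))
    (hatt : (⨆ z, f z - ((c t x z : ℝ) : EReal)) = f y - ((c t x y : ℝ) : EReal))
    -- super-differentiability of c_t(x,·) at y by the Legendre transform of the
    -- final velocity of any maximizing geodesic (property of the cost):
    (hLv : ∀ γ, IsMaxGeodesic t x y γ → Lv γ t ∈ superDiffR (fun z => c t x z) y) :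
    ∀ γ, IsMaxGeodesic t x y γ → Lv γ t ∈ superDiffE f y := by
  intro γ hγ
  refine mem_superDiffE_of_forall_sub_le (hLv γ hγ) fun z => ?_
  rw [← hatt]
  exact le_iSup (fun z => f z - ((c t x z : ℝ) : EReal)) z

theorem stmt_10 {n : ℕ}
    (c : ℝ → EuclideanSpace ℝ (Fin n) → EuclideanSpace ℝ (Fin n) → ℝ)
    (IFuture : EuclideanSpace ℝ (Fin n) → EuclideanSpace ℝ (Fin n) → Prop)
    (IsMaxGeodesic : ℝ → EuclideanSpace ℝ (Fin n) → EuclideanSpace ℝ (Fin n) →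
      (ℝ → EuclideanSpace ℝ (Fin n)) → Prop)
    (Lv : (ℝ → EuclideanSpace ℝ (Fin n)) → ℝ → EuclideanSpace ℝ (Fin n))
    (f : EuclideanSpace ℝ (Fin n) → EReal)
    (t : ℝ) (x y : EuclideanSpace ℝ (Fin n)) (ht : 0 < t) (hI : IFuture x y)
    (hfy : f y ≠ ⊤ ∧ f y ≠ ⊥)
    (hfin : (⨆ z, f z - ((c t x z : ℝ) : EReal)) ≠ ⊤ ∧
            (⨆ z, f z - ((c t x z : ℝ) : EReal)) ≠ ⊥)
    (hatt : (⨆ z, f z - ((c t x z : ℝ) : EReal)) = f y - ((c t x y : ℝ) : EReal))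
    -- super-differentiability of c_t(x,·) at y by the Legendre transform of the
    -- final velocity of any maximizing geodesic (property of the cost):
    (hLv : ∀ γ, IsMaxGeodesic t x y γ → Lv γ t ∈ superDiffR (fun z => c t x z) y) :
    ∀ γ, IsMaxGeodesic t x y γ → Lv γ t ∈ superDiffE f y :=
  stmt_10_general c IsMaxGeodesic Lv f t x y hatt hLv
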